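/- Let G = (V,E) be a finite simple graph with n = #V ≥ 3 vertices which is not complete. Then the set St_{n−1}(G) of stable partitions of G with exactly n−1 blocks is nonempty, and the cardinality of Aut(G) is strictly smaller than the cardinality of the group Aut(χ(G,•)) of natural automorphisms of the chromatic functor; in particular Φ_G : Aut(G) → Aut(χ(G,•)) is not surjective. -/

import Mathlib

/-!
Pick non-adjacent vertices `u ≠ v` and a third vertex `w`. The coloring of `G` by its own
vertices that sends `v` to `u` is regular, and its kernel is a stable partition with `n - 1`
blocks. On the colorings whose kernel is exactly this partition, swapping the colors of `u` and
`w` is natural, since an injective recoloring preserves the kernel and commutes with the swap;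
elsewhere it is the identity. It is not induced by an automorphism `φ` of `G`: it fixes the
identity coloring (whose kernel is trivial), which forces `φ = 1`, yet it moves the collapsing
coloring. Finally `Φ_G` is injective and `Aut(χ(G,•))` is finite, because every coloring
factors through an injection out of some `Fin m` with `m ≤ n`.
-/

/-- A stable partition of a simple graph `G`. -/
def IsStablePartition {V : Type} (G : SimpleGraph V) (P : Set (Set V)) : Prop :=
  Setoid.IsPartition P ∧ ∀ b ∈ P, ∀ v ∈ b, ∀ u ∈ b, ¬ G.Adj v u

/-- The set `χ(G,S)` of regular `S`-colorings of `G`. -/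
abbrev RegColoring {V : Type} (G : SimpleGraph V) (S : Type) : Type :=
  {c : V → S // ∀ v u : V, G.Adj v u → c v ≠ c u}

/-- The action of the chromatic functor on an injection `ι : S → T`: `c ↦ ι ∘ c`. -/
def pushColoring {V : Type} (G : SimpleGraph V) {S T : Type} (ι : S → T)
    (hι : Function.Injective ι) (c : RegColoring G S) : RegColoring G T :=
  ⟨ι ∘ c.1, fun v u h hh => c.2 v u h (hι hh)⟩

/-- A natural automorphism of the chromatic functor `χ(G,•)`. -/
abbrev ChromNatAut {V : Type} (G : SimpleGraph V) : Type 1 :=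
  {f : ∀ S : Type, RegColoring G S → RegColoring G S //
    (∀ S : Type, Function.Bijective (f S)) ∧
    ∀ (S T : Type) (ι : S → T) (hι : Function.Injective ι) (c : RegColoring G S),
      f T (pushColoring G ι hι c) = pushColoring G ι hι (f S c)}

open Function

lemma Finite.card_lt_of_injective_of_not_surjective {α β : Type*} [Finite β] (f : α → β)
    (hf : Injective f) (hs : ¬ Surjective f) : Nat.card α < Nat.card β := by
  have := Finite.of_injective f hf
  have := Fintype.ofFinite α
  have := Fintype.ofFinite β
  simpa only [Nat.card_eq_fintype_card] using Fintype.card_lt_of_injective_not_surjective f hf hs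

lemma Setoid.ker_comp_of_injective {α β γ : Type*} {g : β → γ} (hg : Injective g) (f : α → β) :
    Setoid.ker (g ∘ f) = Setoid.ker f :=
  Setoid.ext fun _ _ => hg.eq_iff

lemma Setoid.ncard_classes_ker {α β : Type*} (f : α → β) :
    (Setoid.ker f).classes.ncard = (Set.range f).ncard := by
  rw [← Nat.card_coe_set_eq, ← Nat.card_coe_set_eq]
  exact Nat.card_congr ((Setoid.quotientEquivClasses _).symm.trans (Setoid.quotientKerEquivRange f))

variable {V : Type} (G : SimpleGraph V)

lemma isStablePartition_classes_ker {S : Type} (c : RegColoring G S) :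
    IsStablePartition G (Setoid.ker c.1).classes := by
  refine ⟨Setoid.isPartition_classes _, ?_⟩
  rintro _ ⟨x, rfl⟩ v hv u hu hvu
  exact c.2 v u hvu (hv.trans hu.symm)

def idColoring : RegColoring G V :=
  ⟨id, fun _ _ h => h.ne⟩

open Classical in
noncomputable def collapseColoring {u v : V} (huv : ¬ G.Adj u v) : RegColoring G V :=
  ⟨update id v u, by
    intro x y hxy hxy'
    rcases eq_or_ne x v with rfl | hx <;> rcases eq_or_ne y x with rfl | hy
    · exact G.loopless.irrefl _ hxy
    · simp only [update_self, update_of_ne hy, id] at hxy'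
      exact huv (hxy' ▸ hxy.symm)
    · exact G.loopless.irrefl _ hxy
    · rcases eq_or_ne y v with rfl | hy'
      · simp only [update_self, update_of_ne hx, id] at hxy'
        exact huv (hxy' ▸ hxy)
      · simp only [update_of_ne hx, update_of_ne hy', id] at hxy'
        exact hy hxy'.symm⟩

open Classical in
lemma range_update_id {u v : V} (huv : u ≠ v) : Set.range (update id v u) = {v}ᶜ := by
  ext x
  constructor
  · rintro ⟨y, rfl⟩
    rcases eq_or_ne y v with rfl | hy
    · simpa using huv
    · simpa [update_of_ne hy] using hy
  · intro hx
    exact ⟨x, update_of_ne hx _ _⟩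

open Classical in
lemma ncard_range_update_id [Finite V] {u v : V} (huv : u ≠ v) :
    (Set.range (update id v u)).ncard = Nat.card V - 1 := by
  rw [range_update_id huv, Set.ncard_compl, Set.ncard_singleton]

section SwapColors

open Classical

variable (r : Setoid V) (u w : V)

noncomputable def swapColorsOnKer (S : Type) (c : RegColoring G S) : RegColoring G S :=
  if Setoid.ker c.1 = r then pushColoring G (Equiv.swap (c.1 u) (c.1 w)) (Equiv.injective _) c
  else c

variable {G r u w} {S : Type} {c : RegColoring G S}

lemma swapColorsOnKer_of_ker_eq (h : Setoid.ker c.1 = r) :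
    (swapColorsOnKer G r u w S c).1 = Equiv.swap (c.1 u) (c.1 w) ∘ c.1 := by
  simp only [swapColorsOnKer, if_pos h, pushColoring]

lemma swapColorsOnKer_of_ker_ne (h : Setoid.ker c.1 ≠ r) : swapColorsOnKer G r u w S c = c :=
  if_neg h

lemma swapColorsOnKer_involutive : Involutive (swapColorsOnKer G r u w S) := by
  intro c
  by_cases h : Setoid.ker c.1 = r
  · have h' : Setoid.ker (swapColorsOnKer G r u w S c).1 = r := by
      rw [swapColorsOnKer_of_ker_eq h, Setoid.ker_comp_of_injective (Equiv.injective _), h]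
    apply Subtype.ext
    rw [swapColorsOnKer_of_ker_eq h', swapColorsOnKer_of_ker_eq h]
    funext x
    simp only [comp_apply, Equiv.swap_apply_left, Equiv.swap_apply_right,
      Equiv.swap_comm (c.1 w), Equiv.swap_apply_self]
  · rw [swapColorsOnKer_of_ker_ne h, swapColorsOnKer_of_ker_ne h]

lemma swapColorsOnKer_pushColoring {T : Type} {ι : S → T} (hι : Injective ι) :
    swapColorsOnKer G r u w T (pushColoring G ι hι c) =
      pushColoring G ι hι (swapColorsOnKer G r u w S c) := by
  have hker : Setoid.ker (pushColoring G ι hι c).1 = Setoid.ker c.1 :=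
    Setoid.ker_comp_of_injective hι c.1
  by_cases h : Setoid.ker c.1 = r
  · apply Subtype.ext
    rw [swapColorsOnKer_of_ker_eq (hker.trans h)]
    simp only [pushColoring, swapColorsOnKer_of_ker_eq h]
    funext x
    exact hι.swap_apply _ _ _
  · rw [swapColorsOnKer_of_ker_ne (hker.trans_ne h), swapColorsOnKer_of_ker_ne h]

variable (G r u w) in
noncomputable def swapColorsOn : ChromNatAut G :=
  ⟨swapColorsOnKer G r u w, fun _ => swapColorsOnKer_involutive.bijective,
    fun _ _ _ hι _ => swapColorsOnKer_pushColoring hι⟩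

end SwapColors

def comapColoring {S : Type} (ψ : G ≃g G) (c : RegColoring G S) : RegColoring G S :=
  ⟨c.1 ∘ ψ, fun _ _ h => c.2 _ _ (ψ.map_adj_iff.mpr h)⟩

lemma comapColoring_symm {S : Type} (ψ : G ≃g G) (c : RegColoring G S) :
    comapColoring G ψ (comapColoring G ψ.symm c) = c :=
  Subtype.ext <| funext fun x => congrArg c.1 (ψ.symm_apply_apply x)

def precompAut (φ : G ≃g G) : ChromNatAut G :=
  ⟨fun _ => comapColoring G φ.symm,
    fun _ => (Equiv.mk _ (comapColoring G φ) (comapColoring_symm G φ)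
      (comapColoring_symm G φ.symm)).bijective,
    fun _ _ _ _ _ => rfl⟩

lemma precompAut_injective : Injective (precompAut G) := by
  intro φ ψ h
  have hsymm : ⇑φ.symm = ⇑ψ.symm :=
    congrArg (fun N : ChromNatAut G => (N.1 V (idColoring G)).1) h
  simpa using congrArg RelIso.symm (RelIso.ext (congrFun hsymm) : φ.symm = ψ.symm)

lemma exists_fin_pushColoring_eq [Finite V] {S : Type} (c : RegColoring G S) :
    ∃ m ≤ Nat.card V, ∃ (c' : RegColoring G (Fin m)) (ι : Fin m → S) (hι : Injective ι),
      pushColoring G ι hι c' = c := by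
  obtain ⟨m, ⟨e⟩⟩ := Finite.exists_equiv_fin (Set.range c.1)
  refine ⟨m, ?_, ⟨e ∘ Set.rangeFactorization c.1, fun v u hvu h => c.2 v u hvu ?_⟩,
    Subtype.val ∘ e.symm, Subtype.val_injective.comp e.symm.injective, ?_⟩
  · rw [← Nat.card_eq_of_equiv_fin e]
    exact Nat.card_le_card_of_surjective _ Set.rangeFactorization_surjective
  · exact congrArg Subtype.val (e.injective h)
  · exact Subtype.ext <| funext fun v => by simp [pushColoring, Set.rangeFactorization]

lemma ChromNatAut.ext_of_fin [Finite V] {f g : ChromNatAut G}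
    (h : ∀ m ≤ Nat.card V, f.1 (Fin m) = g.1 (Fin m)) : f = g := by
  refine Subtype.ext <| funext fun S => funext fun c => ?_
  obtain ⟨m, hm, c', ι, hι, rfl⟩ := exists_fin_pushColoring_eq G c
  rw [f.2.2, g.2.2, h m hm]

instance [Finite V] : Finite (ChromNatAut G) :=
  Finite.of_injective (fun (f : ChromNatAut G) (m : Fin (Nat.card V + 1)) => f.1 (Fin m))
    fun _ _ h => ChromNatAut.ext_of_fin G fun m hm => congrFun h ⟨m, Nat.lt_succ_of_le hm⟩

lemma swapColorsOn_ne_of_precomp {u v w : V} (huv : u ≠ v) (hadj : ¬ G.Adj u v)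
    (hwu : w ≠ u) (hwv : w ≠ v) {N : ChromNatAut G} {σ : V → V}
    (hN : ∀ (S : Type) (c : RegColoring G S), (N.1 S c).1 = c.1 ∘ σ) :
    N ≠ swapColorsOn G (Setoid.ker (collapseColoring G hadj).1) u w := by
  classical
  rintro rfl
  have hker : Setoid.ker (idColoring G).1 ≠ Setoid.ker (collapseColoring G hadj).1 := by
    intro h
    have : Setoid.ker (collapseColoring G hadj).1 u v := by
      simp [Setoid.ker_def, collapseColoring, update_of_ne huv]
    rw [← h] at this
    exact huv this
  have hσ : σ = id := (hN V (idColoring G)).symm.trans (congrArg Subtype.val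
    (swapColorsOnKer_of_ker_ne hker))
  have := congrFun ((hN V (collapseColoring G hadj)).symm.trans
    (swapColorsOnKer_of_ker_eq rfl)) w
  simp only [collapseColoring, hσ, comp_apply, id_eq, update_of_ne hwv, update_of_ne huv,
    Equiv.swap_apply_right] at this
  exact hwu this

/-- Let `G` be a finite simple graph with `n ≥ 3` vertices which is not complete. Then
`St_{n−1}(G)` is nonempty, `#Aut(G) < #Aut(χ(G,•))`, and `Φ_G : φ ↦ (c ↦ c ∘ φ⁻¹)` is not
surjective. -/
theorem stmt14 {V : Type} [Fintype V] (G : SimpleGraph V) (n : ℕ)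
    (hn : Fintype.card V = n) (h3 : 3 ≤ n)
    (hnc : ¬ ∀ v u : V, v ≠ u → G.Adj v u) :
    {P : Set (Set V) | IsStablePartition G P ∧ P.ncard = n - 1}.Nonempty ∧
    Nat.card (G ≃g G) < Nat.card (ChromNatAut G) ∧
    ∀ Φ : (G ≃g G) → ChromNatAut G,
      (∀ (φ : G ≃g G) (S : Type) (c : RegColoring G S),
        ((Φ φ).1 S c).1 = c.1 ∘ ⇑φ.symm) →
      ¬ Function.Surjective Φ := by
  push Not at hnc
  obtain ⟨u, v, huv, hadj⟩ := hnc
  obtain ⟨w, hwu, hwv⟩ : ∃ w, w ≠ u ∧ w ≠ v :=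
    ENat.exists_ne_ne_of_three_le (by simpa [hn] using h3) u v
  have not_surjective : ∀ Φ : (G ≃g G) → ChromNatAut G,
      (∀ (φ : G ≃g G) (S : Type) (c : RegColoring G S),
        ((Φ φ).1 S c).1 = c.1 ∘ ⇑φ.symm) → ¬ Function.Surjective Φ := by
    intro Φ hΦ hsurj
    obtain ⟨φ, hφ⟩ := hsurj (swapColorsOn G (Setoid.ker (collapseColoring G hadj).1) u w)
    exact swapColorsOn_ne_of_precomp G huv hadj hwu hwv (hΦ φ) hφ
  refine ⟨⟨_, isStablePartition_classes_ker G (collapseColoring G hadj), ?_⟩,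
    Finite.card_lt_of_injective_of_not_surjective _ (precompAut_injective G)
      (not_surjective _ fun _ _ _ => rfl), not_surjective⟩
  rw [Setoid.ncard_classes_ker, collapseColoring, ncard_range_update_id huv,
    Nat.card_eq_fintype_card, hn]
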